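/- arXiv:1612.04172 — 4 statements merged into one kernel-verified Lean document; each statement's English description precedes it below -/
import Mathlib

section
/- Let N be a positive integer, let C > 0, and let f : [1,∞) → (0,∞). Suppose that for every δ > 0 and all subsets X, Y, Z of ℤ/Nℤ for which the number of triangles of (X,Y,Z) is at most δN², one can delete at most C·f(1/δ)·N elements in total from X, Y and Z so that no triangle of the resulting sets remains. Then every additive matching in ℤ/Nℤ has size at most C·f(N)·N. -/
/-- An additive matching in an abelian group `G`: a finite indexed family of triples
`(x i, y i, z i)` such that `x i + y j + z k = 0` if and only if `i = j = k`. -/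
def IsAddMatching {G : Type*} [AddCommGroup G] {I : Type*} (x y z : I → G) : Prop :=
  ∀ i j k : I, x i + y j + z k = 0 ↔ (i = j ∧ j = k)

/-- The number of triangles of `(A, B, C)`: triples `(a,b,c) ∈ A × B × C` with `a+b+c = 0`. -/
def triangleCount {G : Type*} [AddCommGroup G] [DecidableEq G] (A B C : Finset G) : ℕ :=
  ((A ×ˢ B ×ˢ C).filter fun p => p.1 + p.2.1 + p.2.2 = 0).card

/-!
The matching `(x i, y i, z i)` is the triangle set of `X = {x i}`, `Y = {y i}`, `Z = {z i}`, so
these sets have exactly `|I| ≤ N` triangles, and the removal hypothesis applies with `δ = 1/N`.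
Since distinct triangles share no vertex, removing all of them costs at least one deleted
element per index, whence `|I| ≤ C f(N) N`.
-/

open Finset Function

lemma triangleCount_eq_zero_iff {G : Type*} [AddCommGroup G] [DecidableEq G]
    {A B C : Finset G} :
    triangleCount A B C = 0 ↔ ∀ a ∈ A, ∀ b ∈ B, ∀ c ∈ C, a + b + c ≠ 0 := by
  simp only [triangleCount, card_eq_zero, filter_eq_empty_iff, mem_product, and_imp, Prod.forall]
  grind

lemma card_filter_apply_notMem_le_card_image_sdiff {α β : Type*} [Fintype α] [DecidableEq β]
    {f : α → β} (hf : Injective f) (s : Finset β) :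
    #{i | f i ∉ s} ≤ #(univ.image f \ s) :=
  card_le_card_of_injOn f (fun i hi => by simp_all) hf.injOn

namespace IsAddMatching

variable {G : Type*} [AddCommGroup G] {I : Type*} {x y z : I → G}

lemma add_add_eq_zero (h : IsAddMatching x y z) (i : I) : x i + y i + z i = 0 :=
  (h i i i).2 ⟨rfl, rfl⟩

lemma injective_left (h : IsAddMatching x y z) : Injective x := fun i j hij =>
  ((h i j j).1 (by rw [hij]; exact h.add_add_eq_zero j)).1

lemma injective_mid (h : IsAddMatching x y z) : Injective y := fun i j hij =>
  ((h j i j).1 (by rw [hij]; exact h.add_add_eq_zero j)).1.symm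

lemma injective_right (h : IsAddMatching x y z) : Injective z := fun i j hij =>
  ((h j j i).1 (by rw [hij]; exact h.add_add_eq_zero j)).2.symm

variable [Fintype I] [DecidableEq G]

lemma triangleCount_image (h : IsAddMatching x y z) :
    triangleCount (univ.image x) (univ.image y) (univ.image z) = Fintype.card I := by
  have htriangles : ((univ.image x ×ˢ univ.image y ×ˢ univ.image z).filter
      fun p => p.1 + p.2.1 + p.2.2 = 0) = univ.image fun i => (x i, y i, z i) := by
    ext ⟨a, b, c⟩
    simp only [mem_filter, mem_product, mem_image, mem_univ, true_and, Prod.mk.injEq]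
    constructor
    · rintro ⟨⟨⟨i, rfl⟩, ⟨j, rfl⟩, ⟨k, rfl⟩⟩, hsum⟩
      obtain ⟨rfl, rfl⟩ := (h i j k).1 hsum
      exact ⟨i, rfl, rfl, rfl⟩
    · rintro ⟨i, rfl, rfl, rfl⟩
      exact ⟨⟨⟨i, rfl⟩, ⟨i, rfl⟩, ⟨i, rfl⟩⟩, h.add_add_eq_zero i⟩
  rw [triangleCount, htriangles,
    card_image_of_injective _ fun i j hij => h.injective_left (congrArg Prod.fst hij), card_univ]

lemma card_le_card_sdiff_of_triangleCount_eq_zero (h : IsAddMatching x y z)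
    {X' Y' Z' : Finset G} (hfree : triangleCount X' Y' Z' = 0) :
    Fintype.card I ≤
      #(univ.image x \ X') + #(univ.image y \ Y') + #(univ.image z \ Z') := by
  classical
  have hcover : univ ⊆
      univ.filter (x · ∉ X') ∪ univ.filter (y · ∉ Y') ∪ univ.filter (z · ∉ Z') := by
    intro i _
    by_contra hi
    simp only [mem_union, mem_filter, mem_univ, true_and, not_or, not_not] at hi
    exact triangleCount_eq_zero_iff.1 hfree _ hi.1.1 _ hi.1.2 _ hi.2 (h.add_add_eq_zero i)
  calc Fintype.card I = #(univ : Finset I) := card_univ.symm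
    _ ≤ #{i | x i ∉ X'} + #{i | y i ∉ Y'} + #{i | z i ∉ Z'} :=
      (card_le_card hcover).trans <| (card_union_le _ _).trans <|
        Nat.add_le_add_right (card_union_le _ _) _
    _ ≤ _ := by
      gcongr
      exacts [card_filter_apply_notMem_le_card_image_sdiff h.injective_left X',
        card_filter_apply_notMem_le_card_image_sdiff h.injective_mid Y',
        card_filter_apply_notMem_le_card_image_sdiff h.injective_right Z']

end IsAddMatching

theorem stmt4_general (N : ℕ) (hN : 0 < N) (C : ℝ) (f : ℝ → ℝ)
    (hrem : ∀ δ : ℝ, 0 < δ → ∀ X Y Z : Finset (ZMod N),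
      (triangleCount X Y Z : ℝ) ≤ δ * N ^ 2 →
      ∃ X' Y' Z' : Finset (ZMod N), X' ⊆ X ∧ Y' ⊆ Y ∧ Z' ⊆ Z ∧
        (((X \ X').card + (Y \ Y').card + (Z \ Z').card : ℕ) : ℝ) ≤ C * f (1 / δ) * N ∧
        triangleCount X' Y' Z' = 0)
    {I : Type} [Fintype I] (x y z : I → ZMod N) (h : IsAddMatching x y z) :
    (Fintype.card I : ℝ) ≤ C * f N * N := by
  have : NeZero N := ⟨hN.ne'⟩
  classical
  have hN' : (0 : ℝ) < N := by exact_mod_cast hN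
  have hcard : (Fintype.card I : ℝ) ≤ N := by
    exact_mod_cast (Fintype.card_le_of_injective x h.injective_left).trans_eq (ZMod.card N)
  obtain ⟨X', Y', Z', -, -, -, hdeleted, hfree⟩ :=
    hrem (1 / N) (by positivity) (univ.image x) (univ.image y) (univ.image z) (by
      rw [h.triangleCount_image, one_div, pow_two, inv_mul_cancel_left₀ hN'.ne']
      exact hcard)
  calc (Fintype.card I : ℝ)
      ≤ ((#(univ.image x \ X') + #(univ.image y \ Y') + #(univ.image z \ Z') : ℕ) : ℝ) := by
        exact_mod_cast h.card_le_card_sdiff_of_triangleCount_eq_zero hfree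
    _ ≤ C * f N * N := by rwa [one_div_one_div] at hdeleted

theorem stmt4 (N : ℕ) (hN : 0 < N) (C : ℝ) (hC : 0 < C) (f : ℝ → ℝ)
    (hf_pos : ∀ x : ℝ, 1 ≤ x → 0 < f x)
    (hrem : ∀ δ : ℝ, 0 < δ → ∀ X Y Z : Finset (ZMod N),
      (triangleCount X Y Z : ℝ) ≤ δ * N ^ 2 →
      ∃ X' Y' Z' : Finset (ZMod N), X' ⊆ X ∧ Y' ⊆ Y ∧ Z' ⊆ Z ∧
        (((X \ X').card + (Y \ Y').card + (Z \ Z').card : ℕ) : ℝ) ≤ C * f (1 / δ) * N ∧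
        triangleCount X' Y' Z' = 0)
    {I : Type} [Fintype I] (x y z : I → ZMod N) (h : IsAddMatching x y z) :
    (Fintype.card I : ℝ) ≤ C * f N * N :=
  stmt4_general N hN C f hrem x y z h
end

section
/- Let N be a prime, let 0 < δ₂ and let X, Y, Z ⊆ ℤ/Nℤ be such that each x ∈ X lies in at most δ₂N triangles of (X,Y,Z), each y ∈ Y lies in at most δ₂N triangles of (X,Y,Z), and each z ∈ Z lies in at most δ₂N triangles of (X,Y,Z). Let l ≥ 1 be an integer and set L = 2l+1, and assume 1/20 ≤ L·δ₂ ≤ 1/10 and L < N. Fix a triangle (x,y,z) of (X,Y,Z). Then among all triples (a,b,d) ∈ ℤ/Nℤ × ℤ/Nℤ × (ℤ/Nℤ \ {0}) for which (x,y,z) is valid with respect to (a,b,d), the number of triples for which (x,y,z) is moreover good is at least 2/5 of the number of triples for which it is valid. -/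
/-! The valid triples `(a, b, d)` are the `(x - r d, y - s d, d)` with `d ≠ 0` and
`|r|, |s| ≤ l`; as `2l < N` these are pairwise distinct, so there are `(N - 1)(2l + 1)²` of them.
If a valid triple is not good, a second valid triangle shares a vertex with `(x, y, z)`, and then
another of its coordinates differs from that of `(x, y, z)` by `m d` with `0 < |m| ≤ 2l`. Hence `d`
is determined by `m` and by one of at most `3 δ₂ N` differences read off the triangles through
`x`, `y` or `z`, so at most `3 δ₂ N · 4l(2l + 1)²` valid triples are bad. This is at most `3/5` of
the valid ones because `(2l + 1) δ₂ ≤ 1/10`. -/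

/-- A triangle of subsets `X, Y, Z`: a triple `(x,y,z) ∈ X × Y × Z` with `x + y + z = 0`. -/
def IsTriangle {G : Type*} [AddCommGroup G] (X Y Z : Set G) (x y z : G) : Prop :=
  x ∈ X ∧ y ∈ Y ∧ z ∈ Z ∧ x + y + z = 0

/-- `w` belongs to the "interval" `{a + r·d : r ∈ [-l, l]}` in `ℤ/Nℤ`. -/
def InInterval {N : ℕ} (a d : ZMod N) (l : ℕ) (w : ZMod N) : Prop :=
  ∃ r : ℤ, |r| ≤ (l : ℤ) ∧ w = a + (r : ZMod N) * d

/-- A triangle `(x,y,z)` of `(X,Y,Z)` is valid with respect to `(a,b,d)` if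
`x ∈ I_X = a + [-l,l]d` and `y ∈ I_Y = b + [-l,l]d`. -/
def IsValidTriangle {N : ℕ} (X Y Z : Set (ZMod N)) (a b d : ZMod N) (l : ℕ)
    (x y z : ZMod N) : Prop :=
  IsTriangle X Y Z x y z ∧ InInterval a d l x ∧ InInterval b d l y

/-- A valid triangle is good if each of `x`, `y` and `z` lies in no valid triangle of
`(X,Y,Z)` other than `(x,y,z)` itself. -/
def IsGoodTriangle {N : ℕ} (X Y Z : Set (ZMod N)) (a b d : ZMod N) (l : ℕ)
    (x y z : ZMod N) : Prop :=
  IsValidTriangle X Y Z a b d l x y z ∧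
    ∀ x' y' z', IsValidTriangle X Y Z a b d l x' y' z' →
      (x' = x ∨ y' = y ∨ z' = z) → (x' = x ∧ y' = y ∧ z' = z)

open Finset

variable {N : ℕ}

lemma ZMod.intCast_mul_right_cancel_of_abs_le [Fact N.Prime] {l : ℕ} (hlN : 2 * l < N)
    {d : ZMod N} (hd : d ≠ 0) {r s : ℤ} (hr : |r| ≤ l) (hs : |s| ≤ l)
    (h : (r : ZMod N) * d = s * d) : r = s := by
  have hdvd : (N : ℤ) ∣ s - r :=
    (ZMod.intCast_eq_intCast_iff_dvd_sub r s N).mp (mul_right_cancel₀ hd h)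
  have hlt : |s - r| < N := by
    rw [abs_le] at hr hs
    rw [abs_lt]
    omega
  linarith [Int.eq_zero_of_abs_lt_dvd hdvd hlt]

/-- The triple `(a, b, d)` placing `x` at position `r` of `a + [-l, l] d` and `y` at position `s`
of `b + [-l, l] d`, where `q = (d, r, s)`. -/
def progressionTriple (x y : ZMod N) (q : ZMod N × ℤ × ℤ) : ZMod N × ZMod N × ZMod N :=
  (x - q.2.1 * q.1, y - q.2.2 * q.1, q.1)

lemma progressionTriple_eq {x y a b d : ZMod N} {r s : ℤ} (hx : x = a + r * d)
    (hy : y = b + s * d) : progressionTriple x y (d, r, s) = (a, b, d) := by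
  simp [progressionTriple, hx, hy]

def validTriples (X Y Z : Set (ZMod N)) (l : ℕ) (x y z : ZMod N) :
    Set (ZMod N × ZMod N × ZMod N) :=
  {p | p.2.2 ≠ 0 ∧ IsValidTriangle X Y Z p.1 p.2.1 p.2.2 l x y z}

def goodTriples (X Y Z : Set (ZMod N)) (l : ℕ) (x y z : ZMod N) :
    Set (ZMod N × ZMod N × ZMod N) :=
  {p | p.2.2 ≠ 0 ∧ IsGoodTriangle X Y Z p.1 p.2.1 p.2.2 l x y z}

lemma progressionTriple_mem_validTriples {X Y Z : Set (ZMod N)} {l : ℕ} {x y z d : ZMod N}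
    {r s : ℤ} (hxyz : IsTriangle X Y Z x y z) (hd : d ≠ 0) (hr : |r| ≤ l) (hs : |s| ≤ l) :
    progressionTriple x y (d, r, s) ∈ validTriples X Y Z l x y z :=
  ⟨hd, hxyz, ⟨r, hr, by simp [progressionTriple]⟩, ⟨s, hs, by simp [progressionTriple]⟩⟩

lemma ncard_validTriples_ge [Fact N.Prime] {X Y Z : Set (ZMod N)} {x y z : ZMod N} (l : ℕ)
    (hlN : 2 * l < N) (hxyz : IsTriangle X Y Z x y z) :
    (N - 1) * (2 * l + 1) ^ 2 ≤ (validTriples X Y Z l x y z).ncard := by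
  set F : Finset (ZMod N × ℤ × ℤ) := univ.erase 0 ×ˢ Icc (-(l : ℤ)) l ×ˢ Icc (-(l : ℤ)) l
  have hF : ∀ q ∈ F, q.1 ≠ 0 ∧ |q.2.1| ≤ l ∧ |q.2.2| ≤ l := by
    simp +contextual [F, abs_le]
  have hinj : Set.InjOn (progressionTriple x y) F := by
    rintro ⟨d, r, s⟩ hq ⟨d', r', s'⟩ hq' h
    obtain ⟨hd, hr, hs⟩ := hF _ hq
    obtain ⟨-, hr', hs'⟩ := hF _ hq'
    simp only [progressionTriple, Prod.mk.injEq] at h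
    obtain ⟨h₁, h₂, rfl⟩ := h
    have := ZMod.intCast_mul_right_cancel_of_abs_le hlN hd hr hr' (sub_right_injective h₁)
    have := ZMod.intCast_mul_right_cancel_of_abs_le hlN hd hs hs' (sub_right_injective h₂)
    simp_all
  have hcard : F.card = (N - 1) * (2 * l + 1) ^ 2 := by
    simp only [F, card_product, card_erase_of_mem (mem_univ _), card_univ, ZMod.card,
      Int.card_Icc]
    rw [show ((l : ℤ) + 1 - -(l : ℤ)).toNat = 2 * l + 1 by omega]
    ring
  calc (N - 1) * (2 * l + 1) ^ 2 = (progressionTriple x y '' F).ncard := by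
        rw [hinj.ncard_image, Set.ncard_coe_finset, hcard]
    _ ≤ _ := by
        refine Set.ncard_le_ncard ?_ (Set.toFinite _)
        rintro _ ⟨⟨d, r, s⟩, hq, rfl⟩
        obtain ⟨hd, hr, hs⟩ := hF _ hq
        exact progressionTriple_mem_validTriples hxyz hd hr hs

/-- The differences `y' - y`, `x' - x`, `x' - x` over the triangles `(x, y', z')`, `(x', y, z')`,
`(x', y', z)`: a valid triangle sharing a vertex with `(x, y, z)` yields a multiple of `d` here. -/
def neighbourOffsets {G : Type*} [AddCommGroup G] (X Y Z : Set G) (x y z : G) : Set G :=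
  (fun p => p.1 - y) '' {p : G × G | IsTriangle X Y Z x p.1 p.2} ∪
    (fun p => p.1 - x) '' {p : G × G | IsTriangle X Y Z p.1 y p.2} ∪
    (fun p => p.1 - x) '' {p : G × G | IsTriangle X Y Z p.1 p.2 z}

lemma ncard_neighbourOffsets_le {G : Type*} [AddCommGroup G] [Finite G] (X Y Z : Set G)
    (x y z : G) :
    (neighbourOffsets X Y Z x y z).ncard ≤
      {p : G × G | IsTriangle X Y Z x p.1 p.2}.ncard +
        {p : G × G | IsTriangle X Y Z p.1 y p.2}.ncard +
        {p : G × G | IsTriangle X Y Z p.1 p.2 z}.ncard := by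
  unfold neighbourOffsets
  grw [Set.ncard_union_le, Set.ncard_union_le, Set.ncard_image_le (Set.toFinite _),
    Set.ncard_image_le (Set.toFinite _), Set.ncard_image_le (Set.toFinite _)]

/-- Triples `(m, r, s)`: `m ≠ 0` is the difference of the positions of two points of one
progression, `r` and `s` are the positions of `x` and `y`. -/
noncomputable def offsetBox (l : ℕ) : Finset (ℤ × ℤ × ℤ) :=
  (Icc (-(2 * l : ℤ)) (2 * l)).erase 0 ×ˢ Icc (-(l : ℤ)) l ×ˢ Icc (-(l : ℤ)) l

lemma card_offsetBox (l : ℕ) : (offsetBox l).card = 4 * l * (2 * l + 1) ^ 2 := by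
  rw [offsetBox, card_product, card_product, card_erase_of_mem (by simp), Int.card_Icc,
    Int.card_Icc, show (2 * (l : ℤ) + 1 - -(2 * l)).toNat = 4 * l + 1 by omega,
    show ((l : ℤ) + 1 - -(l : ℤ)).toNat = 2 * l + 1 by omega, Nat.add_sub_cancel]
  ring

/-- Two distinct points `u, v` of one progression `c + [-l, l] d` determine `d` as `(u - v) / m`
with `0 < |m| ≤ 2l`. -/
lemma exists_mem_offsetBox_progressionTriple_eq [Fact N.Prime] {l : ℕ}
    {a b c d x y u v : ZMod N} {r s : ℤ} (hr : |r| ≤ l) (hs : |s| ≤ l) (hx : x = a + r * d)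
    (hy : y = b + s * d) (hu : InInterval c d l u) (hv : InInterval c d l v) (huv : u ≠ v) :
    ∃ q ∈ offsetBox l, progressionTriple x y ((u - v) / q.1, q.2) = (a, b, d) := by
  obtain ⟨r₁, hr₁, rfl⟩ := hu
  obtain ⟨r₂, hr₂, rfl⟩ := hv
  have hdiff : c + r₁ * d - (c + r₂ * d) = ((r₁ - r₂ : ℤ) : ZMod N) * d := by push_cast; ring
  have hm : ((r₁ - r₂ : ℤ) : ZMod N) ≠ 0 := by
    rintro h
    exact huv (sub_eq_zero.mp (by rw [hdiff, h, zero_mul]))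
  refine ⟨(r₁ - r₂, r, s), ?_, ?_⟩
  · rw [abs_le] at hr hs hr₁ hr₂
    simp only [offsetBox, mem_product, mem_erase, mem_Icc]
    exact ⟨⟨fun h => hm (by simp [h]), by omega, by omega⟩, by omega, by omega⟩
  · rw [hdiff, mul_div_cancel_left₀ d hm]
    exact progressionTriple_eq hx hy

lemma exists_valid_of_not_good {X Y Z : Set (ZMod N)} {a b d : ZMod N} {l : ℕ} {x y z : ZMod N}
    (hv : IsValidTriangle X Y Z a b d l x y z) (hg : ¬IsGoodTriangle X Y Z a b d l x y z) :
    ∃ x' y' z', IsValidTriangle X Y Z a b d l x' y' z' ∧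
      (x' = x ∧ y' ≠ y ∨ y' = y ∧ x' ≠ x ∨ z' = z ∧ x' ≠ x) := by
  simp only [IsGoodTriangle, hv, true_and, not_forall] at hg
  obtain ⟨x', y', z', hv', hshared, hne⟩ := hg
  refine ⟨x', y', z', hv', ?_⟩
  have hsum := hv.1.2.2.2
  have hsum' := hv'.1.2.2.2
  rcases hshared with rfl | rfl | rfl
  · refine .inl ⟨rfl, fun hy => hne ⟨rfl, hy, ?_⟩⟩
    subst hy
    linear_combination hsum' - hsum
  · refine .inr (.inl ⟨rfl, fun hx => hne ⟨hx, rfl, ?_⟩⟩)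
    subst hx
    linear_combination hsum' - hsum
  · refine .inr (.inr ⟨rfl, fun hx => hne ⟨hx, ?_, rfl⟩⟩)
    subst hx
    linear_combination hsum' - hsum

lemma validTriples_subset [Fact N.Prime] {X Y Z : Set (ZMod N)} {l : ℕ} {x y z : ZMod N} :
    validTriples X Y Z l x y z ⊆ goodTriples X Y Z l x y z ∪
      (fun p : ZMod N × ℤ × ℤ × ℤ => progressionTriple x y (p.1 / p.2.1, p.2.2)) ''
        (neighbourOffsets X Y Z x y z ×ˢ offsetBox l) := by
  rintro ⟨a, b, d⟩ ⟨hd, hv⟩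
  by_cases hg : IsGoodTriangle X Y Z a b d l x y z
  · exact .inl ⟨hd, hg⟩
  refine .inr ?_
  obtain ⟨x', y', z', hv', hshared⟩ := exists_valid_of_not_good hv hg
  obtain ⟨-, ⟨r, hr, hx⟩, ⟨s, hs, hy⟩⟩ := hv
  obtain ⟨ht', hx', hy'⟩ := hv'
  obtain ⟨w, hw, q, hq, heq⟩ : ∃ w ∈ neighbourOffsets X Y Z x y z, ∃ q ∈ offsetBox l,
      progressionTriple x y (w / q.1, q.2) = (a, b, d) := by
    rcases hshared with ⟨rfl, hne⟩ | ⟨rfl, hne⟩ | ⟨rfl, hne⟩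
    · exact ⟨_, .inl (.inl ⟨(y', z'), ht', rfl⟩),
        exists_mem_offsetBox_progressionTriple_eq hr hs hx hy hy' ⟨s, hs, hy⟩ hne⟩
    · exact ⟨_, .inl (.inr ⟨(x', z'), ht', rfl⟩),
        exists_mem_offsetBox_progressionTriple_eq hr hs hx hy hx' ⟨r, hr, hx⟩ hne⟩
    · exact ⟨_, .inr ⟨(x', y'), ht', rfl⟩,
        exists_mem_offsetBox_progressionTriple_eq hr hs hx hy hx' ⟨r, hr, hx⟩ hne⟩
  exact ⟨(w, q), ⟨hw, hq⟩, heq⟩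

lemma ncard_validTriples_le [Fact N.Prime] (X Y Z : Set (ZMod N)) (l : ℕ) (x y z : ZMod N) :
    (validTriples X Y Z l x y z).ncard ≤ (goodTriples X Y Z l x y z).ncard +
      (neighbourOffsets X Y Z x y z).ncard * (4 * l * (2 * l + 1) ^ 2) := by
  grw [Set.ncard_le_ncard validTriples_subset (Set.toFinite _), Set.ncard_union_le,
    Set.ncard_image_le ((Set.toFinite _).prod (offsetBox l).finite_toSet), Set.ncard_prod,
    Set.ncard_coe_finset, card_offsetBox]

lemma three_mul_card_offsetBox_le {δ l N : ℝ} (hl : 0 ≤ l) (hLδ : (2 * l + 1) * δ ≤ 1 / 10)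
    (hLN : 2 * l + 1 ≤ N) :
    3 * (δ * N) * (4 * l * (2 * l + 1) ^ 2) ≤ 3 / 5 * ((N - 1) * (2 * l + 1) ^ 2) := by
  have hcoef : 0 ≤ 12 * N * l * (2 * l + 1) := by
    have : 0 ≤ N := by linarith
    positivity
  nlinarith [mul_le_mul_of_nonneg_left hLδ hcoef]

theorem stmt6_general {N : ℕ} (hN : N.Prime) (δ₂ : ℝ)
    (X Y Z : Set (ZMod N))
    (hX : ∀ x ∈ X, ({p : ZMod N × ZMod N | IsTriangle X Y Z x p.1 p.2}.ncard : ℝ) ≤ δ₂ * N)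
    (hY : ∀ y ∈ Y, ({p : ZMod N × ZMod N | IsTriangle X Y Z p.1 y p.2}.ncard : ℝ) ≤ δ₂ * N)
    (hZ : ∀ z ∈ Z, ({p : ZMod N × ZMod N | IsTriangle X Y Z p.1 p.2 z}.ncard : ℝ) ≤ δ₂ * N)
    (l : ℕ)
    (hL2 : (2 * l + 1 : ℝ) * δ₂ ≤ 1 / 10)
    (hLN : 2 * l + 1 < N)
    (x y z : ZMod N) (hxyz : IsTriangle X Y Z x y z) :
    (2 / 5 : ℝ) * ({p : ZMod N × ZMod N × ZMod N | p.2.2 ≠ 0 ∧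
        IsValidTriangle X Y Z p.1 p.2.1 p.2.2 l x y z}.ncard : ℝ) ≤
      ({p : ZMod N × ZMod N × ZMod N | p.2.2 ≠ 0 ∧
        IsGoodTriangle X Y Z p.1 p.2.1 p.2.2 l x y z}.ncard : ℝ) := by
  have : Fact N.Prime := ⟨hN⟩
  change (2 / 5 : ℝ) * (validTriples X Y Z l x y z).ncard ≤ (goodTriples X Y Z l x y z).ncard
  have hlower : ((N : ℝ) - 1) * (2 * l + 1) ^ 2 ≤ (validTriples X Y Z l x y z).ncard := by
    have := ncard_validTriples_ge l (by omega) hxyz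
    rw [← Nat.cast_le (α := ℝ)] at this
    push_cast [Nat.cast_sub hN.one_le] at this
    exact this
  have hupper : ((validTriples X Y Z l x y z).ncard : ℝ) ≤ (goodTriples X Y Z l x y z).ncard +
      (neighbourOffsets X Y Z x y z).ncard * (4 * l * (2 * l + 1) ^ 2) := by
    exact_mod_cast ncard_validTriples_le X Y Z l x y z
  have hoffsets : ((neighbourOffsets X Y Z x y z).ncard : ℝ) ≤ 3 * (δ₂ * N) := by
    have := ncard_neighbourOffsets_le X Y Z x y z
    rw [← Nat.cast_le (α := ℝ)] at this
    push_cast at this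
    linarith [hX x hxyz.1, hY y hxyz.2.1, hZ z hxyz.2.2.1]
  have hbad := mul_le_mul_of_nonneg_right hoffsets
    (by positivity : (0 : ℝ) ≤ 4 * l * (2 * l + 1) ^ 2)
  have hLN' : (2 * l + 1 : ℝ) ≤ N := by exact_mod_cast hLN.le
  linarith [three_mul_card_offsetBox_le l.cast_nonneg hL2 hLN']

theorem stmt6 {N : ℕ} (hN : N.Prime) (δ₂ : ℝ) (hδ₂ : 0 < δ₂)
    (X Y Z : Set (ZMod N))
    (hX : ∀ x ∈ X, ({p : ZMod N × ZMod N | IsTriangle X Y Z x p.1 p.2}.ncard : ℝ) ≤ δ₂ * N)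
    (hY : ∀ y ∈ Y, ({p : ZMod N × ZMod N | IsTriangle X Y Z p.1 y p.2}.ncard : ℝ) ≤ δ₂ * N)
    (hZ : ∀ z ∈ Z, ({p : ZMod N × ZMod N | IsTriangle X Y Z p.1 p.2 z}.ncard : ℝ) ≤ δ₂ * N)
    (l : ℕ) (hl : 1 ≤ l)
    (hL1 : 1 / 20 ≤ (2 * l + 1 : ℝ) * δ₂) (hL2 : (2 * l + 1 : ℝ) * δ₂ ≤ 1 / 10)
    (hLN : 2 * l + 1 < N)
    (x y z : ZMod N) (hxyz : IsTriangle X Y Z x y z) :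
    (2 / 5 : ℝ) * ({p : ZMod N × ZMod N × ZMod N | p.2.2 ≠ 0 ∧
        IsValidTriangle X Y Z p.1 p.2.1 p.2.2 l x y z}.ncard : ℝ) ≤
      ({p : ZMod N × ZMod N × ZMod N | p.2.2 ≠ 0 ∧
        IsGoodTriangle X Y Z p.1 p.2.1 p.2.2 l x y z}.ncard : ℝ) :=
  stmt6_general hN δ₂ X Y Z hX hY hZ l hL2 hLN x y z hxyz
end

section
/- Let N be a prime, let 0 < δ₁ ≤ δ₂, and let X, Y, Z ⊆ ℤ/Nℤ be such that each element of X, of Y, and of Z lies in at least δ₁N and at most δ₂N triangles of (X,Y,Z). Let l ≥ 1 be an integer, set L = 2l+1, and assume 1/20 ≤ L·δ₂ ≤ 1/10 and L < N. Fix x ∈ X. Then among all triples (a,b,d) ∈ ℤ/Nℤ × ℤ/Nℤ × (ℤ/Nℤ \ {0}) with x ∈ I_X, the proportion for which x lies in a good triangle of (X,Y,Z) with respect to (a,b,d) is at least δ₁/(50δ₂). -/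
/-!
Double counting over the admissible parameters `ω = (a, b, d)`, i.e. `d ≠ 0` and `x ∈ I_X`.
For a fixed `ω`, every valid triangle through `x` that is not good shares a vertex with another
valid triangle, and at most one valid triangle through `x` is good, since any two share `x`. Hence
the number of good `ω` is at least `∑_ω #{valid triangles through x} - ∑_ω #{conflicting pairs}`.
A triangle `(x, y, z)` is valid for at least `(N - 1)L²` parameters, because `r ↦ r d` is injective
on `[-l, l]` when `L < N`; a conflicting pair puts two distinct points into one progression, which
leaves `L(L - 1)` choices for `(a, d)`, so it is valid for at most `L²(L - 1)` parameters. As every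
vertex lies in at most `δ₂N` triangles, each triangle through `x` has at most `3δ₂N` conflicts, and
`Lδ₂ ≤ 1/10` makes the first sum win: at least `(7/10) deg(x) L²(N - 1)` parameters are good.
Finally `δ₁N ≤ deg(x)`, `1/20 ≤ Lδ₂` and `#admissible ≤ LN(N - 1)` give the ratio `δ₁/(50δ₂)`.
-/

open Finset
open scoped Classical

lemma card_le_card_conflicts_add {α : Type*} [DecidableEq α] (r : α → α → Prop) {S T : Finset α}
    (hST : S ⊆ T) (hS : ∀ s ∈ S, ∀ s' ∈ S, r s' s) :
    #S ≤ #{p ∈ S ×ˢ T | p.2 ≠ p.1 ∧ r p.2 p.1} +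
      if ∃ s ∈ S, ∀ t ∈ T, r t s → t = s then 1 else 0 := by
  rw [← card_filter_add_card_filter_not (fun s => ∀ t ∈ T, r t s → t = s), add_comm]
  gcongr
  · calc _ ≤ #(image Prod.fst {p ∈ S ×ˢ T | p.2 ≠ p.1 ∧ r p.2 p.1}) := card_le_card fun s hs => by
          simp only [mem_filter, not_forall, exists_prop] at hs
          obtain ⟨hs, t, ht, hts, hne⟩ := hs
          exact mem_image.2 ⟨(s, t), mem_filter.2 ⟨mem_product.2 ⟨hs, ht⟩, hne, hts⟩, rfl⟩
      _ ≤ _ := card_image_le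
  · split_ifs with h
    · refine card_le_one.2 fun s hs s' hs' => ?_
      rw [mem_filter] at hs hs'
      exact (hs.2 s' (hST hs'.1) (hS s hs.1 s' hs'.1)).symm
    · simp only [not_exists, not_and] at h
      simp only [nonpos_iff_eq_zero, card_eq_zero, filter_eq_empty_iff]
      exact h

section Triangles

variable {G : Type*} [AddCommGroup G]

lemma IsTriangle.thd_eq {X Y Z : Set G} {x y z : G} (h : IsTriangle X Y Z x y z) : z = -x - y := by
  linear_combination (norm := abel) h.2.2.2

def SharesVertex (s t : G × G × G) : Prop := s.1 = t.1 ∨ s.2.1 = t.2.1 ∨ s.2.2 = t.2.2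

variable [Fintype G] (X Y Z : Set G)

noncomputable def triangles : Finset (G × G × G) := {t | IsTriangle X Y Z t.1 t.2.1 t.2.2}

variable {X Y Z}

@[simp]
lemma mem_triangles {t : G × G × G} : t ∈ triangles X Y Z ↔ IsTriangle X Y Z t.1 t.2.1 t.2.2 := by
  simp [triangles]

lemma eq_of_mem_triangles {s t : G × G × G} (hs : s ∈ triangles X Y Z) (ht : t ∈ triangles X Y Z)
    (h₁ : s.1 = t.1) (h₂ : s.2.1 = t.2.1) : s = t := by
  rw [mem_triangles] at hs ht
  rw [Prod.ext_iff, Prod.ext_iff, hs.thd_eq, ht.thd_eq, h₁, h₂]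
  exact ⟨rfl, rfl, rfl⟩

variable [DecidableEq G]

lemma card_filter_triangles_fst (x : G) :
    #{t ∈ triangles X Y Z | t.1 = x} = {p : G × G | IsTriangle X Y Z x p.1 p.2}.ncard := by
  rw [← Set.ncard_coe_finset, ← Set.ncard_image_of_injective _
    (f := fun p : G × G => (x, p.1, p.2)) fun p q h => by simp_all [Prod.ext_iff]]
  refine congrArg _ (Set.ext fun ⟨x', y, z⟩ => ?_)
  simp only [coe_filter, mem_triangles, Set.mem_ofPred_eq, Set.mem_image, Prod.mk.injEq]
  aesop

lemma card_filter_triangles_snd (y : G) :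
    #{t ∈ triangles X Y Z | t.2.1 = y} = {p : G × G | IsTriangle X Y Z p.1 y p.2}.ncard := by
  rw [← Set.ncard_coe_finset, ← Set.ncard_image_of_injective _
    (f := fun p : G × G => (p.1, y, p.2)) fun p q h => by simp_all [Prod.ext_iff]]
  refine congrArg _ (Set.ext fun ⟨x, y', z⟩ => ?_)
  simp only [coe_filter, mem_triangles, Set.mem_ofPred_eq, Set.mem_image, Prod.mk.injEq]
  aesop

lemma card_filter_triangles_thd (z : G) :
    #{t ∈ triangles X Y Z | t.2.2 = z} = {p : G × G | IsTriangle X Y Z p.1 p.2 z}.ncard := by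
  rw [← Set.ncard_coe_finset, ← Set.ncard_image_of_injective _
    (f := fun p : G × G => (p.1, p.2, z)) fun p q h => by simp_all [Prod.ext_iff]]
  refine congrArg _ (Set.ext fun ⟨x, y, z'⟩ => ?_)
  simp only [coe_filter, mem_triangles, Set.mem_ofPred_eq, Set.mem_image, Prod.mk.injEq]
  aesop

lemma card_filter_sharesVertex_le (s : G × G × G) :
    #{t ∈ triangles X Y Z | SharesVertex t s} ≤
      {p : G × G | IsTriangle X Y Z s.1 p.1 p.2}.ncard +
      {p : G × G | IsTriangle X Y Z p.1 s.2.1 p.2}.ncard +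
      {p : G × G | IsTriangle X Y Z p.1 p.2 s.2.2}.ncard := by
  rw [← card_filter_triangles_fst, ← card_filter_triangles_snd, ← card_filter_triangles_thd]
  calc _ ≤ #({t ∈ triangles X Y Z | t.1 = s.1} ∪ {t ∈ triangles X Y Z | t.2.1 = s.2.1} ∪
        {t ∈ triangles X Y Z | t.2.2 = s.2.2}) :=
        card_le_card fun t ht => by
          rw [mem_filter] at ht
          simp only [SharesVertex, mem_filter, mem_union] at ht ⊢
          tauto
    _ ≤ _ := (card_union_le _ _).trans (Nat.add_le_add_right (card_union_le _ _) _)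

noncomputable def conflictsAt (X Y Z : Set G) (x : G) : Finset ((G × G × G) × (G × G × G)) :=
  {p ∈ {t ∈ triangles X Y Z | t.1 = x} ×ˢ triangles X Y Z | p.2 ≠ p.1 ∧ SharesVertex p.2 p.1}

lemma card_conflictsAt_le {c : ℝ}
    (hX : ∀ x ∈ X, ({p : G × G | IsTriangle X Y Z x p.1 p.2}.ncard : ℝ) ≤ c)
    (hY : ∀ y ∈ Y, ({p : G × G | IsTriangle X Y Z p.1 y p.2}.ncard : ℝ) ≤ c)
    (hZ : ∀ z ∈ Z, ({p : G × G | IsTriangle X Y Z p.1 p.2 z}.ncard : ℝ) ≤ c) (x : G) :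
    (#(conflictsAt X Y Z x) : ℝ) ≤ #{t ∈ triangles X Y Z | t.1 = x} * (3 * c) := by
  have hsum : #(conflictsAt X Y Z x) ≤
      ∑ s ∈ {t ∈ triangles X Y Z | t.1 = x}, #{t ∈ triangles X Y Z | SharesVertex t s} := by
    rw [conflictsAt, card_filter, sum_product]
    refine sum_le_sum fun s _ => ?_
    rw [card_filter]
    exact sum_le_sum fun t _ => by split_ifs <;> simp_all
  have hdeg : ∀ s ∈ {t ∈ triangles X Y Z | t.1 = x},
      (#{t ∈ triangles X Y Z | SharesVertex t s} : ℝ) ≤ 3 * c := fun s hs => by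
    obtain ⟨hx, hy, hz, -⟩ := mem_triangles.1 (mem_filter.1 hs).1
    have h : (#{t ∈ triangles X Y Z | SharesVertex t s} : ℝ) ≤ _ :=
      Nat.cast_le.2 (card_filter_sharesVertex_le s)
    push_cast at h
    linarith [hX _ hx, hY _ hy, hZ _ hz]
  calc (#(conflictsAt X Y Z x) : ℝ)
      ≤ ∑ s ∈ {t ∈ triangles X Y Z | t.1 = x}, (#{t ∈ triangles X Y Z | SharesVertex t s} : ℝ) := by
        exact_mod_cast hsum
    _ ≤ _ := by
      rw [← nsmul_eq_mul]
      exact sum_le_card_nsmul _ _ _ hdeg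

end Triangles

section Intervals

lemma card_Icc_neg_self (l : ℕ) : #(Icc (-(l : ℤ)) l) = 2 * l + 1 := by
  rw [Int.card_Icc]; omega

variable {N : ℕ}

lemma inInterval_iff {a d w : ZMod N} {l : ℕ} :
    InInterval a d l w ↔ ∃ r ∈ Icc (-(l : ℤ)) l, w = a + r * d := by
  simp only [InInterval, mem_Icc, abs_le]

lemma card_filter_inInterval_le [NeZero N] (l : ℕ) (w : ZMod N) :
    #{ω : ZMod N × ZMod N × ZMod N | ω.2.2 ≠ 0 ∧ InInterval ω.1 ω.2.2 l w} ≤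
      (2 * l + 1) * (N * (N - 1)) := by
  calc _ ≤ #(image (fun q : ℤ × ZMod N × ZMod N => (w - q.1 * q.2.2, q.2.1, q.2.2))
          (Icc (-(l : ℤ)) l ×ˢ univ ×ˢ univ.erase 0)) := card_le_card fun ω hω => by
        obtain ⟨hd, r, hr, hw⟩ := by
          simpa only [mem_filter, mem_univ, true_and, inInterval_iff] using hω
        refine mem_image.2 ⟨(r, ω.2.1, ω.2.2), by simp [hr, hd], ?_⟩
        rw [hw]; simp
    _ ≤ _ := card_image_le
    _ = _ := by
      rw [card_product, card_product, card_Icc_neg_self, card_erase_of_mem (mem_univ _), card_univ,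
        ZMod.card]

variable [Fact N.Prime]

lemma card_filter_two_inInterval_le {w w' : ZMod N} (hw : w ≠ w') (l : ℕ) (u : ZMod N) :
    #{ω : ZMod N × ZMod N × ZMod N | ω.2.2 ≠ 0 ∧ InInterval ω.1 ω.2.2 l w ∧
      InInterval ω.1 ω.2.2 l w' ∧ InInterval ω.2.1 ω.2.2 l u} ≤
      (2 * l + 1) * (2 * l) * (2 * l + 1) := by
  -- two points of `a + [-l, l] d` with indices `r ≠ r'` determine `d = (w - w') / (r - r')`
  let f : (ℤ × ℤ) × ℤ → ZMod N × ZMod N × ZMod N := fun q =>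
    let d := (w - w') / ((q.1.1 : ZMod N) - q.1.2)
    (w - q.1.1 * d, u - q.2 * d, d)
  calc _ ≤ #(image f ((Icc (-(l : ℤ)) l).offDiag ×ˢ Icc (-(l : ℤ)) l)) :=
      card_le_card fun ω hω => by
        obtain ⟨hd, ⟨r, hr, hrw⟩, ⟨r', hr', hrw'⟩, ⟨s, hs, hsu⟩⟩ := by
          simpa only [mem_filter, mem_univ, true_and, inInterval_iff] using hω
        have hsub : w - w' = ((r : ZMod N) - r') * ω.2.2 := by rw [hrw, hrw']; ring
        have hrr : (r : ZMod N) - r' ≠ 0 := by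
          rintro h; rw [h, zero_mul, sub_eq_zero] at hsub; exact hw hsub
        have hd' : (w - w') / ((r : ZMod N) - r') = ω.2.2 := by
          rw [div_eq_iff hrr, hsub, mul_comm]
        refine mem_image.2 ⟨((r, r'), s), ?_, ?_⟩
        · simp only [mem_product, mem_offDiag]
          refine ⟨⟨hr, hr', ?_⟩, hs⟩
          rintro rfl; exact hrr (sub_self _)
        · simp only [f, hd']
          rw [hrw, hsu]
          ext <;> simp
    _ ≤ _ := card_image_le
    _ = _ := by
      rw [card_product, offDiag_card, card_Icc_neg_self, ← Nat.mul_sub_one, Nat.add_sub_cancel]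

lemma card_filter_two_inInterval_le' {w w' : ZMod N} (hw : w ≠ w') (l : ℕ) (u : ZMod N) :
    #{ω : ZMod N × ZMod N × ZMod N | ω.2.2 ≠ 0 ∧ InInterval ω.2.1 ω.2.2 l w ∧
      InInterval ω.2.1 ω.2.2 l w' ∧ InInterval ω.1 ω.2.2 l u} ≤
      (2 * l + 1) * (2 * l) * (2 * l + 1) := by
  refine (card_le_card_of_injOn (fun ω => (ω.2.1, ω.1, ω.2.2)) (fun ω hω => ?_) ?_).trans
    (card_filter_two_inInterval_le hw l u)
  · simp only [coe_filter, mem_univ, true_and, Set.mem_ofPred_eq] at hω ⊢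
    tauto
  · intro ω _ ω' _ h
    simp only [Prod.mk.injEq] at h
    exact Prod.ext h.2.1 (Prod.ext h.1 h.2.2)

lemma eq_of_intCast_mul_eq_intCast_mul {d : ZMod N} (hd : d ≠ 0) {r r' : ℤ} (hrr : |r - r'| < N)
    (h : (r : ZMod N) * d = r' * d) : r = r' := by
  have hdvd := (ZMod.intCast_eq_intCast_iff_dvd_sub r' r N).1 (mul_right_cancel₀ hd h).symm
  exact sub_eq_zero.1 (Int.eq_zero_of_abs_lt_dvd hdvd hrr)

lemma le_card_filter_inInterval {l : ℕ} (hl : 2 * l < N) (w u : ZMod N) :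
    (N - 1) * (2 * l + 1) ^ 2 ≤ #{ω : ZMod N × ZMod N × ZMod N | ω.2.2 ≠ 0 ∧
      InInterval ω.1 ω.2.2 l w ∧ InInterval ω.2.1 ω.2.2 l u} := by
  have hidx : ∀ {d : ZMod N} {r r' : ℤ}, d ≠ 0 → r ∈ Icc (-(l : ℤ)) l → r' ∈ Icc (-(l : ℤ)) l →
      (r : ZMod N) * d = r' * d → r = r' := fun hd hr hr' h =>
    eq_of_intCast_mul_eq_intCast_mul hd (by rw [mem_Icc] at hr hr'; rw [abs_lt]; omega) h
  calc (N - 1) * (2 * l + 1) ^ 2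
        = #((univ.erase (0 : ZMod N)) ×ˢ Icc (-(l : ℤ)) l ×ˢ Icc (-(l : ℤ)) l) := by
        rw [card_product, card_product, card_erase_of_mem (mem_univ _), card_univ, ZMod.card,
          card_Icc_neg_self]
        ring
    _ ≤ _ := by
      refine card_le_card_of_injOn (fun q => (w - q.2.1 * q.1, u - q.2.2 * q.1, q.1))
        (fun q hq => ?_) (fun ⟨d, r, s⟩ hq ⟨d', r', s'⟩ hq' h => ?_)
      · simp only [coe_product, Set.mem_prod, mem_coe, mem_erase, mem_univ, and_true] at hq
        simp only [coe_filter, mem_univ, true_and, Set.mem_ofPred_eq, inInterval_iff]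
        exact ⟨hq.1, ⟨q.2.1, hq.2.1, by ring⟩, ⟨q.2.2, hq.2.2, by ring⟩⟩
      · simp only [coe_product, Set.mem_prod, mem_coe, mem_erase, mem_univ, and_true] at hq hq'
        simp only [Prod.mk.injEq] at h
        obtain ⟨h₁, h₂, rfl⟩ := h
        rw [hidx hq.1 hq.2.1 hq'.2.1 (sub_right_injective h₁),
          hidx hq.1 hq.2.2 hq'.2.2 (sub_right_injective h₂)]

end Intervals

section Parameters

variable {N : ℕ} [NeZero N] (X Y Z : Set (ZMod N)) (l : ℕ)

noncomputable def admissibleParams (x : ZMod N) : Finset (ZMod N × ZMod N × ZMod N) :=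
  {ω | ω.2.2 ≠ 0 ∧ InInterval ω.1 ω.2.2 l x}

noncomputable def validTriangles (ω : ZMod N × ZMod N × ZMod N) :
    Finset (ZMod N × ZMod N × ZMod N) :=
  {t ∈ triangles X Y Z | InInterval ω.1 ω.2.2 l t.1 ∧ InInterval ω.2.1 ω.2.2 l t.2.1}

variable {X Y Z l}

lemma isGoodTriangle_iff {a b d x y z : ZMod N} :
    IsGoodTriangle X Y Z a b d l x y z ↔ (x, y, z) ∈ validTriangles X Y Z l (a, b, d) ∧
      ∀ t ∈ validTriangles X Y Z l (a, b, d), SharesVertex t (x, y, z) → t = (x, y, z) := by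
  simp [IsGoodTriangle, IsValidTriangle, validTriangles, SharesVertex, Prod.ext_iff]

lemma card_filter_triangles_le_add_ite {x : ZMod N} {ω : ZMod N × ZMod N × ZMod N}
    (hω : ω ∈ admissibleParams l x) :
    #{t ∈ triangles X Y Z | t.1 = x ∧ InInterval ω.2.1 ω.2.2 l t.2.1} ≤
      #{p ∈ conflictsAt X Y Z x | InInterval ω.2.1 ω.2.2 l p.1.2.1 ∧ InInterval ω.1 ω.2.2 l p.2.1 ∧
        InInterval ω.2.1 ω.2.2 l p.2.2.1} +
      if ∃ y z, IsGoodTriangle X Y Z ω.1 ω.2.1 ω.2.2 l x y z then 1 else 0 := by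
  have hST : {t ∈ triangles X Y Z | t.1 = x ∧ InInterval ω.2.1 ω.2.2 l t.2.1} ⊆
      validTriangles X Y Z l ω := fun t ht => by
    simp only [mem_filter, validTriangles] at ht ⊢
    exact ⟨ht.1, ht.2.1 ▸ (mem_filter.1 hω).2.2, ht.2.2⟩
  refine (card_le_card_conflicts_add SharesVertex hST (fun s hs s' hs' => ?_)).trans
    (add_le_add (card_le_card fun p hp => ?_) ?_)
  · exact Or.inl ((mem_filter.1 hs').2.1.trans (mem_filter.1 hs).2.1.symm)
  · simp only [mem_filter, mem_product, validTriangles, conflictsAt] at hp ⊢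
    tauto
  · split_ifs with h h'
    · exact le_rfl
    · obtain ⟨s, hs, hiso⟩ := h
      have hs_eq : (x, s.2.1, s.2.2) = s := by rw [← (mem_filter.1 hs).2.1]
      refine absurd ⟨s.2.1, s.2.2, isGoodTriangle_iff.2 ?_⟩ h'
      rw [hs_eq]
      exact ⟨hST hs, hiso⟩
    · exact zero_le_one
    · exact le_rfl

end Parameters

section DoubleCounting

variable {N : ℕ} [Fact N.Prime] {X Y Z : Set (ZMod N)} {l : ℕ}

lemma sum_card_filter_triangles_ge (hl : 2 * l < N) (x : ZMod N) :
    #{t ∈ triangles X Y Z | t.1 = x} * ((N - 1) * (2 * l + 1) ^ 2) ≤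
      ∑ ω ∈ admissibleParams l x,
        #{t ∈ triangles X Y Z | t.1 = x ∧ InInterval ω.2.1 ω.2.2 l t.2.1} := by
  have h := sum_card_bipartiteAbove_eq_sum_card_bipartiteBelow (s := admissibleParams l x)
    (t := {t ∈ triangles X Y Z | t.1 = x}) fun ω t => InInterval ω.2.1 ω.2.2 l t.2.1
  simp only [bipartiteAbove, bipartiteBelow, filter_filter] at h
  rw [h, ← smul_eq_mul]
  refine card_nsmul_le_sum _ _ _ fun t _ => ?_
  rw [admissibleParams, filter_filter]
  simpa only [and_assoc] using le_card_filter_inInterval hl x t.2.1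

lemma sum_card_filter_conflictsAt_le (x : ZMod N) :
    ∑ ω ∈ admissibleParams l x, #{p ∈ conflictsAt X Y Z x | InInterval ω.2.1 ω.2.2 l p.1.2.1 ∧
      InInterval ω.1 ω.2.2 l p.2.1 ∧ InInterval ω.2.1 ω.2.2 l p.2.2.1} ≤
      #(conflictsAt X Y Z x) * ((2 * l + 1) * (2 * l) * (2 * l + 1)) := by
  have h := sum_card_bipartiteAbove_eq_sum_card_bipartiteBelow (s := admissibleParams l x)
    (t := conflictsAt X Y Z x) fun ω p => InInterval ω.2.1 ω.2.2 l p.1.2.1 ∧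
      InInterval ω.1 ω.2.2 l p.2.1 ∧ InInterval ω.2.1 ω.2.2 l p.2.2.1
  simp only [bipartiteAbove, bipartiteBelow] at h
  rw [h, ← smul_eq_mul]
  refine sum_le_card_nsmul _ _ _ fun p hp => ?_
  obtain ⟨⟨hs, ht⟩, hne, -⟩ := by simpa only [conflictsAt, mem_filter, mem_product] using hp
  rw [admissibleParams, filter_filter]
  by_cases hx : p.2.1 = x
  · have hy : p.1.2.1 ≠ p.2.2.1 := fun hy =>
      hne (eq_of_mem_triangles ht hs.1 (hx.trans hs.2.symm) hy.symm)
    refine (card_le_card fun ω hω => ?_).trans (card_filter_two_inInterval_le' hy l x)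
    simp only [mem_filter, mem_univ, true_and] at hω ⊢
    tauto
  · refine (card_le_card fun ω hω => ?_).trans
      (card_filter_two_inInterval_le (Ne.symm hx) l p.1.2.1)
    simp only [mem_filter, mem_univ, true_and] at hω ⊢
    tauto

lemma card_filter_isGoodTriangle_ge (hl : 2 * l < N) {c : ℝ}
    (hX : ∀ x ∈ X, ({p : ZMod N × ZMod N | IsTriangle X Y Z x p.1 p.2}.ncard : ℝ) ≤ c)
    (hY : ∀ y ∈ Y, ({p : ZMod N × ZMod N | IsTriangle X Y Z p.1 y p.2}.ncard : ℝ) ≤ c)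
    (hZ : ∀ z ∈ Z, ({p : ZMod N × ZMod N | IsTriangle X Y Z p.1 p.2 z}.ncard : ℝ) ≤ c)
    (x : ZMod N) :
    (#{t ∈ triangles X Y Z | t.1 = x} : ℝ) * (2 * l + 1) ^ 2 * ((N - 1 : ℝ) - 3 * c * (2 * l)) ≤
      #{ω ∈ admissibleParams l x | ∃ y z, IsGoodTriangle X Y Z ω.1 ω.2.1 ω.2.2 l x y z} := by
  have hpoint : ∑ ω ∈ admissibleParams l x,
        #{t ∈ triangles X Y Z | t.1 = x ∧ InInterval ω.2.1 ω.2.2 l t.2.1} ≤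
      ∑ ω ∈ admissibleParams l x, #{p ∈ conflictsAt X Y Z x | InInterval ω.2.1 ω.2.2 l p.1.2.1 ∧
        InInterval ω.1 ω.2.2 l p.2.1 ∧ InInterval ω.2.1 ω.2.2 l p.2.2.1} +
      #{ω ∈ admissibleParams l x | ∃ y z, IsGoodTriangle X Y Z ω.1 ω.2.1 ω.2.2 l x y z} := by
    rw [card_filter, ← sum_add_distrib]
    exact sum_le_sum fun ω hω => card_filter_triangles_le_add_ite hω
  have hlower := sum_card_filter_triangles_ge (X := X) (Y := Y) (Z := Z) hl x
  have hupper := sum_card_filter_conflictsAt_le (X := X) (Y := Y) (Z := Z) (l := l) x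
  have hconf := card_conflictsAt_le hX hY hZ x
  have hN : ((N - 1 : ℕ) : ℝ) = N - 1 := by rw [Nat.cast_sub NeZero.one_le, Nat.cast_one]
  set n := #{t ∈ triangles X Y Z | t.1 = x}
  set g := #{ω ∈ admissibleParams l x | ∃ y z, IsGoodTriangle X Y Z ω.1 ω.2.1 ω.2.2 l x y z}
  have hcount : n * ((N - 1) * (2 * l + 1) ^ 2) ≤
      #(conflictsAt X Y Z x) * ((2 * l + 1) ^ 2 * (2 * l)) + g := by
    nlinarith [hlower.trans hpoint, hupper]
  have hcount' : (n : ℝ) * ((N - 1) * (2 * l + 1) ^ 2) ≤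
      #(conflictsAt X Y Z x) * ((2 * l + 1) ^ 2 * (2 * l)) + g := by
    rw [← hN]; exact_mod_cast hcount
  have hconf' := mul_le_mul_of_nonneg_right hconf
    (by positivity : (0 : ℝ) ≤ (2 * l + 1) ^ 2 * (2 * l))
  calc (n : ℝ) * (2 * l + 1) ^ 2 * ((N - 1 : ℝ) - 3 * c * (2 * l))
      = n * ((N - 1) * (2 * l + 1) ^ 2) - n * (3 * c) * ((2 * l + 1) ^ 2 * (2 * l)) := by ring
    _ ≤ _ := by linarith

end DoubleCounting

lemma div_mul_le_of_card_bounds {δ₁ δ₂ m P n A g : ℝ} (hm : 0 ≤ m) (hn : 0 ≤ n) (hA : 0 ≤ A)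
    (hL1 : 1 / 20 ≤ (2 * m + 1) * δ₂) (hL2 : (2 * m + 1) * δ₂ ≤ 1 / 10) (hP : 2 * m + 1 < P)
    (hδ₁ : δ₁ * P ≤ n) (hAP : A ≤ (2 * m + 1) * (P * (P - 1)))
    (hg : n * (2 * m + 1) ^ 2 * (P - 1 - 3 * (δ₂ * P) * (2 * m)) ≤ g) :
    δ₁ / (50 * δ₂) * A ≤ g := by
  have hδ₂ : 0 < δ₂ := pos_of_mul_pos_right (a := 2 * m + 1) (by linarith) (by positivity)
  have hP0 : 0 < P := by linarith
  have hP1 : 0 ≤ P - 1 := by linarith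
  have hδP : 0 < 50 * δ₂ * P := by positivity
  have hspread : δ₂ * P * (2 * m) ≤ (P - 1) / 10 := by
    nlinarith [mul_le_mul_of_nonneg_right hL2 (by positivity : 0 ≤ P * (2 * m))]
  have hm' : 0 ≤ n * (2 * m + 1) * (P - 1) := by positivity
  calc δ₁ / (50 * δ₂) * A ≤ n / (50 * δ₂ * P) * ((2 * m + 1) * (P * (P - 1))) := by
        refine mul_le_mul ?_ hAP hA (by positivity)
        rw [div_le_div_iff₀ (by positivity) hδP]
        nlinarith
    _ = n * (2 * m + 1) * (P - 1) / (50 * δ₂) := by field_simp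
    _ ≤ 7 / 10 * (n * (2 * m + 1) ^ 2 * (P - 1)) := by
        rw [div_le_iff₀ (by positivity)]
        nlinarith [mul_le_mul_of_nonneg_left hL1 hm']
    _ ≤ g := by
        nlinarith [mul_le_mul_of_nonneg_left hspread (by positivity : 0 ≤ n * (2 * m + 1) ^ 2)]

theorem stmt7_general {N : ℕ} (hN : N.Prime) (δ₁ δ₂ : ℝ)
    (X Y Z : Set (ZMod N))
    (hX : ∀ x ∈ X, δ₁ * N ≤ ({p : ZMod N × ZMod N | IsTriangle X Y Z x p.1 p.2}.ncard : ℝ) ∧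
      ({p : ZMod N × ZMod N | IsTriangle X Y Z x p.1 p.2}.ncard : ℝ) ≤ δ₂ * N)
    (hY : ∀ y ∈ Y, δ₁ * N ≤ ({p : ZMod N × ZMod N | IsTriangle X Y Z p.1 y p.2}.ncard : ℝ) ∧
      ({p : ZMod N × ZMod N | IsTriangle X Y Z p.1 y p.2}.ncard : ℝ) ≤ δ₂ * N)
    (hZ : ∀ z ∈ Z, δ₁ * N ≤ ({p : ZMod N × ZMod N | IsTriangle X Y Z p.1 p.2 z}.ncard : ℝ) ∧
      ({p : ZMod N × ZMod N | IsTriangle X Y Z p.1 p.2 z}.ncard : ℝ) ≤ δ₂ * N)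
    (l : ℕ)
    (hL1 : 1 / 20 ≤ (2 * l + 1 : ℝ) * δ₂) (hL2 : (2 * l + 1 : ℝ) * δ₂ ≤ 1 / 10)
    (hLN : 2 * l + 1 < N)
    (x : ZMod N) (hx : x ∈ X) :
    δ₁ / (50 * δ₂) *
        ({p : ZMod N × ZMod N × ZMod N | p.2.2 ≠ 0 ∧ InInterval p.1 p.2.2 l x}.ncard : ℝ) ≤
      ({p : ZMod N × ZMod N × ZMod N | p.2.2 ≠ 0 ∧ InInterval p.1 p.2.2 l x ∧
        ∃ y z, IsGoodTriangle X Y Z p.1 p.2.1 p.2.2 l x y z}.ncard : ℝ) := by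
  have := Fact.mk hN
  rw [Set.ncard_eq_toFinset_card', Set.ncard_eq_toFinset_card', Set.toFinset_ofPred,
    Set.toFinset_ofPred]
  have hgood := card_filter_isGoodTriangle_ge (l := l) (by omega) (c := δ₂ * N)
    (fun y hy => (hX y hy).2) (fun y hy => (hY y hy).2) (fun z hz => (hZ z hz).2) x
  rw [admissibleParams, filter_filter] at hgood
  simp only [and_assoc] at hgood
  have hparams := card_filter_inInterval_le l x
  rw [← Nat.cast_le (α := ℝ)] at hparams
  push_cast [Nat.cast_sub hN.one_le] at hparams
  refine div_mul_le_of_card_bounds l.cast_nonneg (Nat.cast_nonneg _) (Nat.cast_nonneg _) hL1 hL2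
    (by exact_mod_cast hLN) ?_ hparams hgood
  rw [card_filter_triangles_fst]
  exact (hX x hx).1

theorem stmt7 {N : ℕ} (hN : N.Prime) (δ₁ δ₂ : ℝ) (hδ₁ : 0 < δ₁) (hδ₁₂ : δ₁ ≤ δ₂)
    (X Y Z : Set (ZMod N))
    (hX : ∀ x ∈ X, δ₁ * N ≤ ({p : ZMod N × ZMod N | IsTriangle X Y Z x p.1 p.2}.ncard : ℝ) ∧
      ({p : ZMod N × ZMod N | IsTriangle X Y Z x p.1 p.2}.ncard : ℝ) ≤ δ₂ * N)
    (hY : ∀ y ∈ Y, δ₁ * N ≤ ({p : ZMod N × ZMod N | IsTriangle X Y Z p.1 y p.2}.ncard : ℝ) ∧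
      ({p : ZMod N × ZMod N | IsTriangle X Y Z p.1 y p.2}.ncard : ℝ) ≤ δ₂ * N)
    (hZ : ∀ z ∈ Z, δ₁ * N ≤ ({p : ZMod N × ZMod N | IsTriangle X Y Z p.1 p.2 z}.ncard : ℝ) ∧
      ({p : ZMod N × ZMod N | IsTriangle X Y Z p.1 p.2 z}.ncard : ℝ) ≤ δ₂ * N)
    (l : ℕ) (hl : 1 ≤ l)
    (hL1 : 1 / 20 ≤ (2 * l + 1 : ℝ) * δ₂) (hL2 : (2 * l + 1 : ℝ) * δ₂ ≤ 1 / 10)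
    (hLN : 2 * l + 1 < N)
    (x : ZMod N) (hx : x ∈ X) :
    δ₁ / (50 * δ₂) *
        ({p : ZMod N × ZMod N × ZMod N | p.2.2 ≠ 0 ∧ InInterval p.1 p.2.2 l x}.ncard : ℝ) ≤
      ({p : ZMod N × ZMod N × ZMod N | p.2.2 ≠ 0 ∧ InInterval p.1 p.2.2 l x ∧
        ∃ y z, IsGoodTriangle X Y Z p.1 p.2.1 p.2.2 l x y z}.ncard : ℝ) :=
  stmt7_general hN δ₁ δ₂ X Y Z hX hY hZ l hL1 hL2 hLN x hx
end

section
/- Let N be a prime, let X, Y, Z ⊆ ℤ/Nℤ, let a, b, d ∈ ℤ/Nℤ with d ≠ 0, let l ≥ 1 be an integer with 8l < N, and let M be an integer with M > 8l. Suppose (x_i, y_i, z_i), i ∈ I, is a finite family of pairwise distinct good triangles of (X,Y,Z) with respect to (a,b,d), and write x_i = a + r_i·d, y_i = b + s_i·d, z_i = -a-b + t_i·d with integers r_i, s_i ∈ [-l,l] and t_i ∈ [-2l,2l]. Then the family of triples (r_i mod M, s_i mod M, t_i mod M), i ∈ I, is an additive matching in ℤ/Mℤ of size |I|. -/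
theorem stmt9 {N : ℕ} (hN : N.Prime) (X Y Z : Set (ZMod N)) (a b d : ZMod N) (hd : d ≠ 0)
    (l : ℕ) (hl : 1 ≤ l) (hlN : 8 * l < N) (M : ℕ) (hM : 8 * l < M)
    {I : Type} [Fintype I] (x y z : I → ZMod N) (r s t : I → ℤ)
    (hdist : ∀ i j : I, (x i, y i, z i) = (x j, y j, z j) → i = j)
    (hgood : ∀ i, IsGoodTriangle X Y Z a b d l (x i) (y i) (z i))
    (hr : ∀ i, |r i| ≤ (l : ℤ)) (hs : ∀ i, |s i| ≤ (l : ℤ)) (ht : ∀ i, |t i| ≤ 2 * (l : ℤ))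
    (hxr : ∀ i, x i = a + (r i : ZMod N) * d)
    (hys : ∀ i, y i = b + (s i : ZMod N) * d)
    (hzt : ∀ i, z i = -a - b + (t i : ZMod N) * d) :
    IsAddMatching (fun i => (r i : ZMod M)) (fun i => (s i : ZMod M))
      (fun i => (t i : ZMod M)) := by

  -- First: for each i, the integer sum r i + s i + t i = 0.
  have key : ∀ i, r i + s i + t i = 0 := by
    intro i
    have hsum : x i + y i + z i = 0 := (hgood i).1.1.2.2.2
    have hcast : ((r i + s i + t i : ℤ) : ZMod N) * d = 0 := by
      rw [hxr i, hys i, hzt i] at hsum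
      push_cast
      linear_combination hsum
    have hdvd : (N : ℤ) ∣ (r i + s i + t i) := by
      haveI : Fact N.Prime := ⟨hN⟩
      have := (mul_eq_zero.1 hcast).resolve_right hd
      exact (ZMod.intCast_zmod_eq_zero_iff_dvd _ _).1 this
    refine Int.eq_zero_of_abs_lt_dvd hdvd ?_
    have h1 := hr i; have h2 := hs i; have h3 := ht i
    have : (8 * l : ℤ) < N := by exact_mod_cast hlN
    have habs : |r i + s i + t i| ≤ 4 * (l : ℤ) := by
      calc |r i + s i + t i| ≤ |r i| + |s i| + |t i| := abs_add_three _ _ _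
        _ ≤ 4 * (l : ℤ) := by linarith
    have hlpos : (1 : ℤ) ≤ l := by exact_mod_cast hl
    linarith
  intro i j k
  constructor
  · intro h
    -- integer sum is 0
    have hdvd : (M : ℤ) ∣ (r i + s j + t k) := by
      rw [← ZMod.intCast_zmod_eq_zero_iff_dvd]
      push_cast
      simpa using h
    have hzero : r i + s j + t k = 0 := by
      refine Int.eq_zero_of_abs_lt_dvd hdvd ?_
      have h1 := hr i; have h2 := hs j; have h3 := ht k
      have : (8 * l : ℤ) < M := by exact_mod_cast hM
      have hlpos : (1 : ℤ) ≤ l := by exact_mod_cast hl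
      have habs : |r i + s j + t k| ≤ 4 * (l : ℤ) := by
        calc |r i + s j + t k| ≤ |r i| + |s j| + |t k| := abs_add_three _ _ _
          _ ≤ 4 * (l : ℤ) := by linarith
      linarith
    -- (x i, y j, z k) is a valid triangle
    have hvalid : IsValidTriangle X Y Z a b d l (x i) (y j) (z k) := by
      refine ⟨⟨(hgood i).1.1.1, (hgood j).1.1.2.1, (hgood k).1.1.2.2.1, ?_⟩,
        ⟨r i, hr i, hxr i⟩, ⟨s j, hs j, hys j⟩⟩
      rw [hxr i, hys j, hzt k]
      have : ((r i + s j + t k : ℤ) : ZMod N) = 0 := by rw [hzero]; simp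
      push_cast at this
      linear_combination (d) * this
    obtain ⟨_, hyji, hzki⟩ := (hgood i).2 _ _ _ hvalid (Or.inl rfl)
    have hij : i = j := by
      obtain ⟨hx, hy, hz⟩ := (hgood j).2 _ _ _ (hgood i).1 (Or.inr (Or.inl hyji.symm))
      exact (hdist i j (by rw [hx, hy, hz])).symm ▸ hdist i j (by rw [hx, hy, hz])
    have hik : i = k := by
      obtain ⟨hx, hy, hz⟩ := (hgood k).2 _ _ _ (hgood i).1 (Or.inr (Or.inr hzki.symm))
      exact hdist i k (by rw [hx, hy, hz])
    exact ⟨hij, hij ▸ hik⟩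
  · rintro ⟨rfl, rfl⟩
    have := key i
    have : ((r i + s i + t i : ℤ) : ZMod M) = 0 := by rw [this]; simp
    push_cast at this
    simpa using this
end
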